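/- Let n ≥ 1 and m ≥ 1 be integers and let j, α be real numbers with α − j > 0 and α > −n. Then ∫_{ℝ^{2n}} ∫_{ℝ^m} (1+|v|²)^j ((1+|v|²)² + 16|z|²)^{−(n+m+α)/2} dz dv = (π^{n+m/2}/4^m) · Γ(α−j) Γ((n+α)/2) / (Γ(n−j+α) Γ((n+m+α)/2)). -/

import Mathlib

/-!
Substituting `z ↦ (4 / (1 + |v|²)) z` turns the inner integral into a power of `1 + |v|²` times
`∫ (1 + |z|²)^(-s) dz`, so the double integral is a product of two integrals of this shape. In polar
coordinates each becomes a one-dimensional integral which the substitutions `t = y²` and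
`u = t / (1 + t)` reduce to Euler's Beta integral `B(a, b) = Γ(a) Γ(b) / Γ(a + b)`.
-/

open MeasureTheory Real Set Module

theorem integral_rpow_mul_one_sub_rpow {a b : ℝ} (ha : 0 < a) (hb : 0 < b) :
    ∫ u in (0 : ℝ)..1, u ^ (a - 1) * (1 - u) ^ (b - 1) = Gamma a * Gamma b / Gamma (a + b) := by
  apply Complex.ofReal_injective
  push_cast
  rw [← Complex.Gamma_ofReal, ← Complex.Gamma_ofReal, ← Complex.Gamma_ofReal,
    Complex.ofReal_add, ← Complex.betaIntegral_eq_Gamma_mul_div _ _ (by simpa) (by simpa),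
    Complex.betaIntegral, ← intervalIntegral.integral_ofReal]
  refine intervalIntegral.integral_congr fun u hu => ?_
  rw [uIcc_of_le zero_le_one] at hu
  simp only [Complex.ofReal_mul, Complex.ofReal_cpow hu.1, Complex.ofReal_cpow (sub_nonneg.2 hu.2)]
  push_cast
  rfl

theorem image_div_one_sub_Ioo : (fun u : ℝ => u / (1 - u)) '' Ioo 0 1 = Ioi 0 := by
  ext t
  constructor
  · rintro ⟨u, ⟨hu0, hu1⟩, rfl⟩
    exact div_pos hu0 (sub_pos.2 hu1)
  · intro (ht : 0 < t)
    refine ⟨t / (1 + t), ⟨by positivity, (div_lt_one (by positivity)).2 (by linarith)⟩, ?_⟩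
    field_simp
    ring

theorem integral_Ioi_rpow_mul_one_add_rpow_neg {a b : ℝ} (ha : 0 < a) (hb : 0 < b) :
    ∫ t in Ioi (0 : ℝ), t ^ (a - 1) * (1 + t) ^ (-(a + b)) =
      Gamma a * Gamma b / Gamma (a + b) := by
  have hderiv : ∀ u ∈ Ioo (0 : ℝ) 1,
      HasDerivWithinAt (fun u : ℝ => u / (1 - u)) ((1 - u) ^ 2)⁻¹ (Ioo 0 1) u := by
    intro u hu
    have hv : 1 - u ≠ 0 := (sub_pos.2 hu.2).ne'
    refine ((hasDerivAt_id u).div ((hasDerivAt_id u).const_sub 1) hv).hasDerivWithinAt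
      |>.congr_deriv ?_
    simp only [id]
    ring
  have hinj : InjOn (fun u : ℝ => u / (1 - u)) (Ioo 0 1) := by
    intro x hx y hy hxy
    have := sub_pos.2 hx.2
    have := sub_pos.2 hy.2
    field_simp at hxy
    linarith
  rw [← image_div_one_sub_Ioo, integral_image_eq_integral_abs_deriv_smul measurableSet_Ioo hderiv
    hinj, ← integral_rpow_mul_one_sub_rpow ha hb, intervalIntegral.integral_of_le zero_le_one,
    integral_Ioc_eq_integral_Ioo]
  refine setIntegral_congr_fun measurableSet_Ioo fun u hu => ?_
  have hv : 0 < 1 - u := sub_pos.2 hu.2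
  have hsum : 1 + u / (1 - u) = (1 - u)⁻¹ := by field_simp; ring
  have hsplit : (1 - u) ^ (a + b) = (1 - u) ^ (a - 1) * (1 - u) ^ (b - 1) * (1 - u) ^ 2 := by
    rw [← rpow_natCast, ← rpow_add hv, ← rpow_add hv]
    ring_nf
  rw [abs_of_pos (by positivity), smul_eq_mul, hsum, div_rpow hu.1.le hv.le, inv_rpow hv.le,
    rpow_neg hv.le, inv_inv, hsplit]
  field_simp

theorem integral_Ioi_rpow_mul_one_add_sq_rpow_neg {p s : ℝ} (hp : 0 < p) (hs : p / 2 < s) :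
    ∫ y in Ioi (0 : ℝ), y ^ (p - 1) * (1 + y ^ 2) ^ (-s) =
      Gamma (p / 2) * Gamma (s - p / 2) / (2 * Gamma s) := by
  have hbeta := integral_Ioi_rpow_mul_one_add_rpow_neg (half_pos hp) (sub_pos.2 hs)
  rw [add_sub_cancel] at hbeta
  rw [mul_comm 2, ← div_div, ← hbeta,
    ← integral_comp_rpow_Ioi (fun t => t ^ (p / 2 - 1) * (1 + t) ^ (-s)) two_ne_zero,
    eq_div_iff two_ne_zero, ← integral_mul_const]
  refine setIntegral_congr_fun measurableSet_Ioi fun y (hy : 0 < y) => ?_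
  have hexp : y ^ ((2 : ℝ) - 1) * (y ^ 2) ^ (p / 2 - 1) = y ^ (p - 1) := by
    rw [← rpow_natCast, ← rpow_mul hy.le, ← rpow_add hy]
    ring_nf
  rw [smul_eq_mul, rpow_two, abs_two, ← hexp]
  ring

theorem volume_univ_of_subsingleton {E : Type*} [NormedAddCommGroup E] [InnerProductSpace ℝ E]
    [FiniteDimensional ℝ E] [MeasurableSpace E] [BorelSpace E] [Subsingleton E] :
    volume (univ : Set E) = 1 := by
  have h := (stdOrthonormalBasis ℝ E).volume_parallelepiped
  have hne : (parallelepiped (stdOrthonormalBasis ℝ E)).Nonempty :=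
    nonempty_of_measure_ne_zero (h ▸ one_ne_zero)
  rwa [hne.eq_univ] at h

theorem integral_one_add_norm_sq_rpow_neg {E : Type*} [NormedAddCommGroup E]
    [InnerProductSpace ℝ E] [FiniteDimensional ℝ E] [MeasurableSpace E] [BorelSpace E] {s : ℝ}
    (hs : (finrank ℝ E : ℝ) / 2 < s) :
    ∫ x : E, (1 + ‖x‖ ^ 2) ^ (-s) =
      π ^ ((finrank ℝ E : ℝ) / 2) * Gamma (s - finrank ℝ E / 2) / Gamma s := by
  rcases subsingleton_or_nontrivial E with hE | hE
  · have : Unique E := uniqueOfSubsingleton 0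
    rw [finrank_zero_of_subsingleton, Nat.cast_zero, zero_div] at hs ⊢
    simp [integral_unique, measureReal_def, volume_univ_of_subsingleton,
      (Gamma_pos_of_pos hs).ne', Subsingleton.elim (default : E) 0]
  rw [integral_fun_norm_addHaar volume (fun y => (1 + y ^ 2) ^ (-s)), measureReal_def,
    InnerProductSpace.volume_ball]
  set d := finrank ℝ E
  have hd : (0 : ℝ) < d := Nat.cast_pos.2 finrank_pos
  have hradial : ∫ y in Ioi (0 : ℝ), y ^ (d - 1) • (1 + y ^ 2) ^ (-s) =
      Gamma (d / 2) * Gamma (s - d / 2) / (2 * Gamma s) := by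
    rw [← integral_Ioi_rpow_mul_one_add_sq_rpow_neg hd hs]
    refine setIntegral_congr_fun measurableSet_Ioi fun y (hy : 0 < y) => ?_
    rw [smul_eq_mul, ← rpow_natCast, Nat.cast_pred finrank_pos]
  have hsqrt : √π ^ d = π ^ ((d : ℝ) / 2) := by
    rw [sqrt_eq_rpow, ← rpow_natCast, ← rpow_mul pi_pos.le, one_div_mul_eq_div]
  rw [hradial, ENNReal.ofReal_one, one_pow, one_mul, ENNReal.toReal_ofReal (by positivity), hsqrt,
    Gamma_add_one (half_pos hd).ne']
  have := Gamma_pos_of_pos (half_pos hd)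
  have := Gamma_pos_of_pos (hs.trans' (half_pos hd))
  simp only [nsmul_eq_mul, smul_eq_mul]
  field_simp

theorem integral_sq_add_sq_mul_norm_sq_rpow_neg {E : Type*} [NormedAddCommGroup E]
    [NormedSpace ℝ E] [FiniteDimensional ℝ E] [MeasurableSpace E] [BorelSpace E]
    (μ : Measure E) [μ.IsAddHaarMeasure] {a b : ℝ} (ha : 0 < a) (hb : 0 < b) (s : ℝ) :
    ∫ z, (a ^ 2 + b ^ 2 * ‖z‖ ^ 2) ^ (-s) ∂μ =
      a ^ ((finrank ℝ E : ℝ) - 2 * s) / b ^ finrank ℝ E * ∫ x, (1 + ‖x‖ ^ 2) ^ (-s) ∂μ := by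
  have hfactor : ∀ z : E, (a ^ 2 + b ^ 2 * ‖z‖ ^ 2) ^ (-s) =
      a ^ (-2 * s) * (1 + ‖(b / a) • z‖ ^ 2) ^ (-s) := fun z => by
    have hbase : a ^ 2 + b ^ 2 * ‖z‖ ^ 2 = a ^ 2 * (1 + ‖(b / a) • z‖ ^ 2) := by
      rw [norm_smul, norm_of_nonneg (by positivity)]
      field_simp
    rw [hbase, mul_rpow (by positivity) (by positivity), ← rpow_natCast, ← rpow_mul ha.le]
    push_cast
    ring_nf
  simp_rw [hfactor]
  rw [integral_const_mul, Measure.integral_comp_smul μ (fun x => (1 + ‖x‖ ^ 2) ^ (-s)) (b / a),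
    smul_eq_mul, ← inv_pow, inv_div, abs_of_pos (by positivity), div_pow, ← rpow_natCast a,
    ← mul_assoc, mul_div_assoc', ← rpow_add ha]
  ring_nf

theorem stmt_0_general (n m : ℕ) (j α : ℝ)
    (h1 : 0 < α - j) (h2 : -(n : ℝ) < α) :
    (∫ v : EuclideanSpace ℝ (Fin (2 * n)), ∫ z : EuclideanSpace ℝ (Fin m),
        (1 + ‖v‖ ^ 2) ^ j *
          ((1 + ‖v‖ ^ 2) ^ 2 + 16 * ‖z‖ ^ 2) ^ (-(((n : ℝ) + m + α) / 2))) =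
      π ^ ((n : ℝ) + (m : ℝ) / 2) / 4 ^ m *
        (Gamma (α - j) * Gamma (((n : ℝ) + α) / 2) /
          (Gamma ((n : ℝ) - j + α) * Gamma (((n : ℝ) + (m : ℝ) + α) / 2))) := by
  set s := ((n : ℝ) + m + α) / 2 with hs
  have hinner : ∀ v : EuclideanSpace ℝ (Fin (2 * n)),
      ∫ z : EuclideanSpace ℝ (Fin m),
          (1 + ‖v‖ ^ 2) ^ j * ((1 + ‖v‖ ^ 2) ^ 2 + 16 * ‖z‖ ^ 2) ^ (-s) =
        (∫ z : EuclideanSpace ℝ (Fin m), (1 + ‖z‖ ^ 2) ^ (-s)) / 4 ^ m *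
          (1 + ‖v‖ ^ 2) ^ (-((n : ℝ) - j + α)) := fun v => by
    have hA : 0 < 1 + ‖v‖ ^ 2 := by positivity
    have hexp : (1 + ‖v‖ ^ 2) ^ j * (1 + ‖v‖ ^ 2) ^ ((m : ℝ) - 2 * s) =
        (1 + ‖v‖ ^ 2) ^ (-((n : ℝ) - j + α)) := by
      rw [← rpow_add hA, hs]
      ring_nf
    rw [integral_const_mul, show (16 : ℝ) = 4 ^ 2 by norm_num,
      integral_sq_add_sq_mul_norm_sq_rpow_neg volume hA four_pos, finrank_euclideanSpace_fin,
      ← hexp]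
    ring
  simp_rw [hinner]
  rw [integral_const_mul, integral_one_add_norm_sq_rpow_neg, integral_one_add_norm_sq_rpow_neg,
    finrank_euclideanSpace_fin, finrank_euclideanSpace_fin]
  · rw [show ((2 * n : ℕ) : ℝ) / 2 = n by push_cast; ring, show (n : ℝ) - j + α - n = α - j by ring,
      hs, show ((n : ℝ) + m + α) / 2 - m / 2 = (n + α) / 2 by ring, add_comm (n : ℝ),
      rpow_add pi_pos]
    ring
  · rw [finrank_euclideanSpace_fin]
    push_cast
    linarith
  · rw [finrank_euclideanSpace_fin, hs]
    linarith

theorem stmt_0 (n m : ℕ) (hn : 1 ≤ n) (hm : 1 ≤ m) (j α : ℝ)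
    (h1 : 0 < α - j) (h2 : -(n : ℝ) < α) :
    (∫ v : EuclideanSpace ℝ (Fin (2 * n)), ∫ z : EuclideanSpace ℝ (Fin m),
        (1 + ‖v‖ ^ 2) ^ j *
          ((1 + ‖v‖ ^ 2) ^ 2 + 16 * ‖z‖ ^ 2) ^ (-(((n : ℝ) + m + α) / 2))) =
      π ^ ((n : ℝ) + (m : ℝ) / 2) / 4 ^ m *
        (Gamma (α - j) * Gamma (((n : ℝ) + α) / 2) /
          (Gamma ((n : ℝ) - j + α) * Gamma (((n : ℝ) + (m : ℝ) + α) / 2))) :=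
  stmt_0_general n m j α h1 h2
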